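/- For every integer k ≥ 1, one has K^{k}𝟏(x₀) ≥ (C_β/(C_β+C_δ))^{k} · k^{−(C_β+C_δ)/C_R}. -/

import Mathlib

open MeasureTheory

/-- Birth rate in the allometric setting with `β = α−1`: `b(x) = C_β x^{α−1}` for
`x > x₀` and `0` otherwise. -/
noncomputable def birthRate (x₀ Cβ α : ℝ) (x : ℝ) : ℝ :=
  if x₀ < x then Cβ * x ^ (α - 1) else 0

/-- Death rate `d(x) = C_δ x^{α−1}`. -/
noncomputable def deathRate (Cδ α : ℝ) (x : ℝ) : ℝ := Cδ * x ^ (α - 1)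

/-- Net energy gain `g(x) = C_R x^α`. -/
noncomputable def energyGain (CR α : ℝ) (x : ℝ) : ℝ := CR * x ^ α

/-- The operator `K`:
`K f(ξ) = ∫_ξ^∞ (b(x)/g(x)) exp(−∫_ξ^x (b+d)/g) f(x−x₀) dx`. -/
noncomputable def Kop (x₀ Cβ Cδ CR α : ℝ) (f : ℝ → ℝ) (ξ : ℝ) : ℝ :=
  ∫ x in Set.Ioi ξ,
    birthRate x₀ Cβ α x / energyGain CR α x *
      Real.exp
        (-(∫ τ in ξ..x,
            (birthRate x₀ Cβ α τ + deathRate Cδ α τ) / energyGain CR α τ)) *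
      f (x - x₀)

/-!
Above `x₀` the hazard `(b + d) / g` equals `γ / τ` with `γ = (C_β + C_δ) / C_R`, so for `ξ ≥ x₀`
`K f(ξ) = (C_β / C_R) ξ^γ ∫_ξ^∞ x^{-γ-1} f(x - x₀) dx`: the next jump occurs at a Pareto
distributed energy `x > ξ` and is a birth with probability `p = C_β / (C_β + C_δ)`, after which the
energy is `x - x₀ > ξ - x₀`. Induction gives `K^k 𝟏 ≥ p^k` on `[k x₀, ∞)`. Started at `x₀`, the
first jump lands beyond `k x₀` with probability `k^{-γ}`, and from there `K^{k-1} 𝟏 ≥ p^{k-1}`.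
-/

open Set Real

section ReciprocalRate

variable {w : ℝ → ℝ} {a b c : ℝ}

theorem intervalIntegrable_of_eqOn_mul_inv (ha : 0 < a) (hab : a ≤ b)
    (hw : EqOn w (fun τ => c * τ⁻¹) (Ioc a b)) : IntervalIntegrable w volume a b := by
  refine IntervalIntegrable.congr (f := fun τ => c * τ⁻¹) ?_ ?_
  · rw [uIoc_of_le hab]
    exact hw.symm
  · refine (intervalIntegral.intervalIntegrable_inv (fun τ hτ => ?_) continuousOn_id).const_mul c
    rw [uIcc_of_le hab] at hτ
    exact (ha.trans_le hτ.1).ne'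

theorem exp_neg_integral_of_eqOn_mul_inv (ha : 0 < a) (hab : a ≤ b)
    (hw : EqOn w (fun τ => c * τ⁻¹) (Ioc a b)) :
    exp (-∫ τ in a..b, w τ) = (a / b) ^ c := by
  have hb : 0 < b := ha.trans_le hab
  have hint : ∫ τ in a..b, w τ = ∫ τ in a..b, c * τ⁻¹ :=
    intervalIntegral.integral_congr_ae (Filter.Eventually.of_forall fun τ hτ =>
      hw (by rwa [uIoc_of_le hab] at hτ))
  rw [hint, intervalIntegral.integral_const_mul, integral_inv_of_pos ha hb,
    rpow_def_of_pos (div_pos ha hb), ← inv_div b a, log_inv]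
  ring_nf

end ReciprocalRate

section TailIntegral

variable {g : ℝ → ℝ} {a c ξ m : ℝ}

theorem integral_Ioi_rpow_neg_sub_one (hc : 0 < c) (ha : 0 < a) :
    ∫ x in Ioi a, x ^ (-c - 1) = a ^ (-c) / c := by
  rw [integral_Ioi_rpow_of_lt (by linarith) ha, sub_add_cancel, neg_div_neg_eq]

theorem setIntegral_Ioi_rpow_mul_le (hc : 0 < c) (ha : 0 < a)
    (hg : IntegrableOn (fun x => x ^ (-c - 1) * g x) (Ioi a)) (hg1 : ∀ x ∈ Ioi a, g x ≤ 1) :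
    ∫ x in Ioi a, x ^ (-c - 1) * g x ≤ a ^ (-c) / c := by
  rw [← integral_Ioi_rpow_neg_sub_one hc ha]
  refine setIntegral_mono_on hg (integrableOn_Ioi_rpow_of_lt (by linarith) ha)
    measurableSet_Ioi fun x hx => ?_
  exact mul_le_of_le_one_right (rpow_nonneg (ha.trans hx).le _) (hg1 x hx)

theorem le_setIntegral_Ioi_rpow_mul (hc : 0 < c) (hξ : 0 < ξ) (hξa : ξ ≤ a)
    (hg : IntegrableOn (fun x => x ^ (-c - 1) * g x) (Ioi ξ)) (hg0 : ∀ x ∈ Ioi ξ, 0 ≤ g x)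
    (hm : ∀ x ∈ Ioi a, m ≤ g x) :
    m * (a ^ (-c) / c) ≤ ∫ x in Ioi ξ, x ^ (-c - 1) * g x := by
  have ha : 0 < a := hξ.trans_le hξa
  calc m * (a ^ (-c) / c) = ∫ x in Ioi a, x ^ (-c - 1) * m := by
        rw [integral_mul_const, integral_Ioi_rpow_neg_sub_one hc ha, mul_comm]
    _ ≤ ∫ x in Ioi a, x ^ (-c - 1) * g x :=
        setIntegral_mono_on ((integrableOn_Ioi_rpow_of_lt (by linarith) ha).mul_const m)
          (hg.mono_set (Ioi_subset_Ioi hξa)) measurableSet_Ioi fun x hx =>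
            mul_le_mul_of_nonneg_left (hm x hx) (rpow_nonneg (ha.trans hx).le _)
    _ ≤ ∫ x in Ioi ξ, x ^ (-c - 1) * g x :=
        setIntegral_mono_set hg
          ((ae_restrict_iff' measurableSet_Ioi).2 (Filter.Eventually.of_forall fun x hx =>
            mul_nonneg (rpow_nonneg (hξ.trans hx).le _) (hg0 x hx)))
          (Ioi_subset_Ioi hξa).eventuallyLE

theorem antitoneOn_setIntegral_Ioi (hg : IntegrableOn g (Ioi a)) (hg0 : ∀ x ∈ Ioi a, 0 ≤ g x) :
    AntitoneOn (fun t => ∫ x in Ioi t, g x) (Ici a) := fun _ hs _ _ hst =>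
  setIntegral_mono_set (hg.mono_set (Ioi_subset_Ioi hs))
    ((ae_restrict_iff' measurableSet_Ioi).2 (Filter.Eventually.of_forall fun x hx =>
      hg0 x (mem_Ioi.2 (lt_of_le_of_lt hs hx))))
    (Ioi_subset_Ioi hst).eventuallyLE

end TailIntegral

/-- Measurability is what makes the integrals defining `Kop` genuine: the Bochner integral of a
non-integrable function is `0`. -/
structure IsUnitValuedOn (f : ℝ → ℝ) (s : Set ℝ) : Prop where
  aestronglyMeasurable : AEStronglyMeasurable f (volume.restrict s)
  mem_Icc : ∀ y ∈ s, f y ∈ Icc (0 : ℝ) 1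

theorem IsUnitValuedOn.integrableOn_rpow_mul_comp_sub {f : ℝ → ℝ} {a c ξ : ℝ}
    (hf : IsUnitValuedOn f (Ioi 0)) (hc : 0 < c) (ha : 0 < a) (hξ : a ≤ ξ) :
    IntegrableOn (fun x => x ^ (-c - 1) * f (x - a)) (Ioi ξ) := by
  have hshift : MeasurePreserving (· - a) (volume.restrict (Ioi a)) (volume.restrict (Ioi 0)) := by
    simpa [preimage_sub_const_Ioi] using
      (measurePreserving_sub_right volume a).restrict_preimage (measurableSet_Ioi (a := 0))
  refine (integrableOn_Ioi_rpow_of_lt (by linarith) (ha.trans_le hξ)).mul_bdd (c := 1)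
    ((hf.aestronglyMeasurable.comp_measurePreserving hshift).mono_measure
      (Measure.restrict_mono_set volume (Ioi_subset_Ioi hξ)))
    ((ae_restrict_iff' measurableSet_Ioi).2 (Filter.Eventually.of_forall fun x hx => ?_))
  have hfx := hf.mem_Icc (x - a) (sub_pos.2 (hξ.trans_lt hx))
  rw [Real.norm_eq_abs, abs_of_nonneg hfx.1]
  exact hfx.2

theorem rpow_sub_one_div_rpow {τ : ℝ} (hτ : 0 < τ) (α : ℝ) : τ ^ (α - 1) / τ ^ α = τ⁻¹ := by
  rw [rpow_sub_one hτ.ne', div_div_cancel_left' (rpow_pos_of_pos hτ α).ne']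

noncomputable def hazard (x₀ Cβ Cδ CR α τ : ℝ) : ℝ :=
  (birthRate x₀ Cβ α τ + deathRate Cδ α τ) / energyGain CR α τ

/-- Probability that the individual process started at energy `ξ` reaches energy `x` without
jumping. -/
noncomputable def survival (x₀ Cβ Cδ CR α ξ x : ℝ) : ℝ :=
  exp (-∫ τ in ξ..x, hazard x₀ Cβ Cδ CR α τ)

section Allometric

variable {x₀ Cβ Cδ CR α : ℝ} {f : ℝ → ℝ}

theorem Kop_eq_integral_survival (ξ : ℝ) :
    Kop x₀ Cβ Cδ CR α f ξ = ∫ x in Ioi ξ,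
      birthRate x₀ Cβ α x / energyGain CR α x * survival x₀ Cβ Cδ CR α ξ x * f (x - x₀) :=
  rfl

theorem birthRate_of_le {x : ℝ} (h : x ≤ x₀) : birthRate x₀ Cβ α x = 0 :=
  if_neg h.not_gt

theorem birthRate_div_energyGain_of_lt {x : ℝ} (hx : 0 < x) (h : x₀ < x) :
    birthRate x₀ Cβ α x / energyGain CR α x = Cβ / CR * x⁻¹ := by
  rw [birthRate, if_pos h, energyGain, mul_div_mul_comm, rpow_sub_one_div_rpow hx]

theorem hazard_eqOn_Ioi (hx₀ : 0 ≤ x₀) :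
    EqOn (hazard x₀ Cβ Cδ CR α) (fun τ => (Cβ + Cδ) / CR * τ⁻¹) (Ioi x₀) := fun τ hτ => by
  have hτ0 : 0 < τ := hx₀.trans_lt hτ
  rw [hazard, birthRate, if_pos (show x₀ < τ from hτ), deathRate, energyGain, ← add_mul,
    mul_div_mul_comm, rpow_sub_one_div_rpow hτ0]

theorem hazard_eqOn_Ioc {η : ℝ} (hη : 0 < η) :
    EqOn (hazard x₀ Cβ Cδ CR α) (fun τ => Cδ / CR * τ⁻¹) (Ioc η x₀) := fun τ hτ => by
  rw [hazard, birthRate_of_le hτ.2, zero_add, deathRate, energyGain, mul_div_mul_comm,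
    rpow_sub_one_div_rpow (hη.trans hτ.1)]

theorem survival_of_le (hx₀ : 0 < x₀) {ξ x : ℝ} (hξ : x₀ ≤ ξ) (hξx : ξ ≤ x) :
    survival x₀ Cβ Cδ CR α ξ x = (ξ / x) ^ ((Cβ + Cδ) / CR) :=
  exp_neg_integral_of_eqOn_mul_inv (hx₀.trans_le hξ) hξx
    ((hazard_eqOn_Ioi hx₀.le).mono fun _ hτ => hξ.trans_lt hτ.1)

theorem survival_eq_rpow_mul {η x : ℝ} (hx₀ : 0 < x₀) (hη : 0 < η) (hηx₀ : η ≤ x₀)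
    (hx : x₀ ≤ x) :
    survival x₀ Cβ Cδ CR α η x = (η / x₀) ^ (Cδ / CR) * survival x₀ Cβ Cδ CR α x₀ x := by
  have below : EqOn (hazard x₀ Cβ Cδ CR α) _ (Ioc η x₀) := hazard_eqOn_Ioc hη
  have above : EqOn (hazard x₀ Cβ Cδ CR α) _ (Ioc x₀ x) :=
    (hazard_eqOn_Ioi hx₀.le).mono Ioc_subset_Ioi_self
  rw [survival, ← intervalIntegral.integral_add_adjacent_intervals
      (intervalIntegrable_of_eqOn_mul_inv hη hηx₀ below)
      (intervalIntegrable_of_eqOn_mul_inv hx₀ hx above),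
    neg_add, exp_add, exp_neg_integral_of_eqOn_mul_inv hη hηx₀ below, survival]

theorem Kop_eq_of_le (hx₀ : 0 < x₀) {ξ : ℝ} (hξ : x₀ ≤ ξ) :
    Kop x₀ Cβ Cδ CR α f ξ = Cβ / CR * ξ ^ ((Cβ + Cδ) / CR) *
      ∫ x in Ioi ξ, x ^ (-((Cβ + Cδ) / CR) - 1) * f (x - x₀) := by
  rw [Kop_eq_integral_survival, ← integral_const_mul]
  refine setIntegral_congr_fun measurableSet_Ioi fun x hx => ?_
  have hξ0 : 0 < ξ := hx₀.trans_le hξ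
  have hx0 : 0 < x := hξ0.trans hx
  rw [birthRate_div_energyGain_of_lt hx0 (hξ.trans_lt hx), survival_of_le hx₀ hξ (le_of_lt hx),
    div_rpow hξ0.le hx0.le, rpow_sub_one hx0.ne', rpow_neg hx0.le]
  ring

theorem Kop_eq_rpow_mul_of_le (hx₀ : 0 < x₀) {η : ℝ} (hη : 0 < η) (hηx₀ : η ≤ x₀) :
    Kop x₀ Cβ Cδ CR α f η = (η / x₀) ^ (Cδ / CR) * Kop x₀ Cβ Cδ CR α f x₀ := by
  rw [Kop_eq_integral_survival, Kop_eq_integral_survival, ← integral_const_mul,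
    setIntegral_eq_of_subset_of_forall_sdiff_eq_zero measurableSet_Ioi (Ioi_subset_Ioi hηx₀)]
  · refine setIntegral_congr_fun measurableSet_Ioi fun x hx => ?_
    rw [survival_eq_rpow_mul hx₀ hη hηx₀ (le_of_lt hx)]
    ring
  · intro x hx
    rw [birthRate_of_le (not_lt.1 hx.2), zero_div, zero_mul, zero_mul]

theorem Kop_eq_min_rpow_mul (hx₀ : 0 < x₀) {η : ℝ} (hη : 0 < η) :
    Kop x₀ Cβ Cδ CR α f η =
      min (η / x₀) 1 ^ (Cδ / CR) * Kop x₀ Cβ Cδ CR α f (max η x₀) := by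
  rcases le_total η x₀ with h | h
  · rw [min_eq_left ((div_le_one hx₀).2 h), max_eq_right h, Kop_eq_rpow_mul_of_le hx₀ hη h]
  · rw [min_eq_right ((one_le_div hx₀).2 h), max_eq_left h, one_rpow, one_mul]

theorem Kop_mem_Icc_of_le (hx₀ : 0 < x₀) (hCβ : 0 < Cβ) (hCδ : 0 < Cδ) (hCR : 0 < CR)
    (hf : IsUnitValuedOn f (Ioi 0)) {ξ : ℝ} (hξ : x₀ ≤ ξ) :
    Kop x₀ Cβ Cδ CR α f ξ ∈ Icc 0 (Cβ / (Cβ + Cδ)) := by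
  have hξ0 : 0 < ξ := hx₀.trans_le hξ
  have hγ : 0 < (Cβ + Cδ) / CR := by positivity
  have hfx : ∀ x ∈ Ioi ξ, f (x - x₀) ∈ Icc 0 1 := fun x hx =>
    hf.mem_Icc _ (sub_pos.2 (hξ.trans_lt hx))
  have hcoef : 0 ≤ Cβ / CR * ξ ^ ((Cβ + Cδ) / CR) := by positivity
  rw [Kop_eq_of_le hx₀ hξ]
  constructor
  · exact mul_nonneg hcoef (setIntegral_nonneg measurableSet_Ioi fun x hx =>
      mul_nonneg (rpow_nonneg (hξ0.trans hx).le _) (hfx x hx).1)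
  · calc _ ≤ Cβ / CR * ξ ^ ((Cβ + Cδ) / CR) * (ξ ^ (-((Cβ + Cδ) / CR)) / ((Cβ + Cδ) / CR)) :=
          mul_le_mul_of_nonneg_left (setIntegral_Ioi_rpow_mul_le hγ hξ0
            (hf.integrableOn_rpow_mul_comp_sub hγ hx₀ hξ) fun x hx => (hfx x hx).2) hcoef
      _ = Cβ / (Cβ + Cδ) := by
          rw [rpow_neg hξ0.le]
          field_simp

theorem isUnitValuedOn_Kop (hx₀ : 0 < x₀) (hCβ : 0 < Cβ) (hCδ : 0 < Cδ) (hCR : 0 < CR)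
    (hf : IsUnitValuedOn f (Ioi 0)) : IsUnitValuedOn (Kop x₀ Cβ Cδ CR α f) (Ioi 0) := by
  set γ := (Cβ + Cδ) / CR
  have hγ : 0 < γ := by positivity
  -- On `[x₀, ∞)`, `Kop f` is a power of `ξ` times this antitone tail integral; below `x₀` it is
  -- a rescaling of its value at `x₀`.
  have hΦ : Antitone fun η => ∫ x in Ioi (max η x₀), x ^ (-γ - 1) * f (x - x₀) :=
    fun s t hst => antitoneOn_setIntegral_Ioi (hf.integrableOn_rpow_mul_comp_sub hγ hx₀ le_rfl)
      (fun x hx => mul_nonneg (rpow_nonneg (hx₀.trans hx).le _)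
        (hf.mem_Icc _ (sub_pos.2 (mem_Ioi.1 hx))).1)
      (le_max_right s x₀) (le_max_right t x₀) (max_le_max hst le_rfl)
  have hmax : Measurable fun η => Kop x₀ Cβ Cδ CR α f (max η x₀) := by
    simp_rw [Kop_eq_of_le hx₀ (le_max_right _ x₀)]
    exact (measurable_const.mul (by fun_prop)).mul hΦ.measurable
  refine ⟨((measurable_id.div_const x₀).min measurable_const |>.pow_const _ |>.mul
    hmax).aestronglyMeasurable.congr ((ae_restrict_iff' measurableSet_Ioi).2
      (Filter.Eventually.of_forall fun η hη => (Kop_eq_min_rpow_mul hx₀ hη).symm)),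
    fun η hη => ?_⟩
  have hmin : 0 ≤ min (η / x₀) 1 := le_min (div_pos hη hx₀).le zero_le_one
  have hK := Kop_mem_Icc_of_le (α := α) hx₀ hCβ hCδ hCR hf (le_max_right η x₀)
  have hp : Cβ / (Cβ + Cδ) ≤ 1 := (div_le_one (by positivity)).2 (by linarith)
  rw [Kop_eq_min_rpow_mul hx₀ hη]
  exact ⟨mul_nonneg (rpow_nonneg hmin _) hK.1,
    mul_le_one₀ (rpow_le_one hmin (min_le_right _ _) (by positivity)) hK.1 (hK.2.trans hp)⟩

theorem le_Kop (hx₀ : 0 < x₀) (hCβ : 0 < Cβ) (hCδ : 0 < Cδ) (hCR : 0 < CR)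
    (hf : IsUnitValuedOn f (Ioi 0)) {ξ a m : ℝ} (hξ : x₀ ≤ ξ) (hξa : ξ ≤ a)
    (hm : ∀ y, a - x₀ < y → m ≤ f y) :
    Cβ / (Cβ + Cδ) * m * (a / ξ) ^ (-((Cβ + Cδ) / CR)) ≤ Kop x₀ Cβ Cδ CR α f ξ := by
  have hξ0 : 0 < ξ := hx₀.trans_le hξ
  have ha : 0 < a := hξ0.trans_le hξa
  have hγ : 0 < (Cβ + Cδ) / CR := by positivity
  have hbound := le_setIntegral_Ioi_rpow_mul (m := m) hγ hξ0 hξa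
    (hf.integrableOn_rpow_mul_comp_sub hγ hx₀ hξ)
    (fun x hx => (hf.mem_Icc _ (sub_pos.2 (hξ.trans_lt hx))).1)
    (fun x hx => hm _ (sub_lt_sub_right hx x₀))
  rw [Kop_eq_of_le hx₀ hξ]
  calc _ = Cβ / CR * ξ ^ ((Cβ + Cδ) / CR) *
        (m * (a ^ (-((Cβ + Cδ) / CR)) / ((Cβ + Cδ) / CR))) := by
        rw [div_rpow ha.le hξ0.le, rpow_neg hξ0.le]
        field_simp
    _ ≤ _ := mul_le_mul_of_nonneg_left hbound (by positivity)

theorem isUnitValuedOn_iterate_Kop_one (hx₀ : 0 < x₀) (hCβ : 0 < Cβ) (hCδ : 0 < Cδ)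
    (hCR : 0 < CR) (k : ℕ) : IsUnitValuedOn ((Kop x₀ Cβ Cδ CR α)^[k] fun _ => 1) (Ioi 0) := by
  induction k with
  | zero => exact ⟨aestronglyMeasurable_const, fun _ _ => ⟨zero_le_one, le_rfl⟩⟩
  | succ k ih =>
    rw [Function.iterate_succ_apply']
    exact isUnitValuedOn_Kop hx₀ hCβ hCδ hCR ih

theorem pow_le_iterate_Kop_one (hx₀ : 0 < x₀) (hCβ : 0 < Cβ) (hCδ : 0 < Cδ) (hCR : 0 < CR) :
    ∀ (k : ℕ) (ξ : ℝ), k * x₀ ≤ ξ →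
      (Cβ / (Cβ + Cδ)) ^ k ≤ (Kop x₀ Cβ Cδ CR α)^[k] (fun _ => 1) ξ
  | 0, _, _ => le_rfl
  | k + 1, ξ, hξ => by
    push_cast at hξ
    have hξ' : x₀ ≤ ξ := by nlinarith [(k.cast_nonneg : (0 : ℝ) ≤ k)]
    have hξ0 : 0 < ξ := hx₀.trans_le hξ'
    rw [Function.iterate_succ_apply']
    calc (Cβ / (Cβ + Cδ)) ^ (k + 1)
        = Cβ / (Cβ + Cδ) * (Cβ / (Cβ + Cδ)) ^ k * (ξ / ξ) ^ (-((Cβ + Cδ) / CR)) := by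
          rw [div_self hξ0.ne', one_rpow, mul_one, pow_succ']
      _ ≤ _ := le_Kop hx₀ hCβ hCδ hCR (isUnitValuedOn_iterate_Kop_one hx₀ hCβ hCδ hCR k)
          hξ' le_rfl fun y hy =>
            pow_le_iterate_Kop_one hx₀ hCβ hCδ hCR k y (by linarith)

end Allometric

theorem stmt11_general (α x₀ Cβ Cδ CR : ℝ)
    (hx₀ : 0 < x₀)
    (hCβ : 0 < Cβ) (hCδ : 0 < Cδ) (hCR : 0 < CR) :
    ∀ k : ℕ, 1 ≤ k →
      (Cβ / (Cβ + Cδ)) ^ k * (k : ℝ) ^ (-((Cβ + Cδ) / CR)) ≤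
        (Kop x₀ Cβ Cδ CR α)^[k] (fun _ => 1) x₀ := by
  intro k hk
  obtain ⟨j, rfl⟩ := Nat.exists_eq_add_of_le' hk
  have hx₀k : x₀ ≤ ((j + 1 : ℕ) : ℝ) * x₀ :=
    le_mul_of_one_le_left hx₀.le (by exact_mod_cast hk)
  rw [Function.iterate_succ_apply']
  calc (Cβ / (Cβ + Cδ)) ^ (j + 1) * ((j + 1 : ℕ) : ℝ) ^ (-((Cβ + Cδ) / CR))
      = Cβ / (Cβ + Cδ) * (Cβ / (Cβ + Cδ)) ^ j *
          (((j + 1 : ℕ) : ℝ) * x₀ / x₀) ^ (-((Cβ + Cδ) / CR)) := by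
        rw [mul_div_cancel_right₀ _ hx₀.ne', pow_succ']
    _ ≤ _ := le_Kop hx₀ hCβ hCδ hCR (isUnitValuedOn_iterate_Kop_one hx₀ hCβ hCδ hCR j) le_rfl
        hx₀k fun y hy => pow_le_iterate_Kop_one hx₀ hCβ hCδ hCR j y (by push_cast at hy; linarith)

/-- Lemma 6.17: for every `k ≥ 1`,
`K^k 𝟏(x₀) ≥ (C_β/(C_β+C_δ))^k · k^{−(C_β+C_δ)/C_R}`. -/
theorem stmt11 (α x₀ Cβ Cδ CR : ℝ)
    (hα0 : 0 < α) (hα1 : α ≤ 1) (hx₀ : 0 < x₀)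
    (hCβ : 0 < Cβ) (hCδ : 0 < Cδ) (hCR : 0 < CR) :
    ∀ k : ℕ, 1 ≤ k →
      (Cβ / (Cβ + Cδ)) ^ k * (k : ℝ) ^ (-((Cβ + Cδ) / CR)) ≤
        (Kop x₀ Cβ Cδ CR α)^[k] (fun _ => 1) x₀ :=
  stmt11_general α x₀ Cβ Cδ CR hx₀ hCβ hCδ hCR
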